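/- Let g, g' be independent standard Gaussian vectors in a finite-dimensional real Hilbert space H, let u_1,…,u_M be linear operators on H, set Z_i = ⟨u_i g, u_i g'⟩ and Ẑ_i = ⟨u_i g, u_i g⟩ − E⟨u_i g, u_i g⟩. Then for every p ≥ 1: (1/2)‖ sup_{i≤M} |Ẑ_i| ‖_p ≤ ‖ sup_{i≤M} |Z_i| ‖_p ≤ ‖ sup_{i≤M} |Ẑ_i| ‖_p. -/

import Mathlib

open MeasureTheory ProbabilityTheory RealInnerProductSpace

/-- The standard Gaussian measure on the Euclidean space `ℝ^d`. -/
noncomputable def stdGaussian (d : ℕ) : Measure (EuclideanSpace ℝ (Fin d)) :=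
  (Measure.pi fun _ : Fin d => gaussianReal 0 1).map
    (MeasurableEquiv.toLp 2 (Fin d → ℝ))

/-!
Rotating the independent pair `(g, g')` by `π/4` preserves its law and turns
`⟨u g, u g'⟩` into `(‖u g'‖² - ‖u g‖²) / 2`, so `‖sup |Z|‖_p` is half the `L^p` norm of
`sup_i |Ẑ_i(g) - Ẑ_i(g')|`. The latter is at most `2 ‖sup |Ẑ|‖_p` by Minkowski, and at least
`‖sup |Ẑ|‖_p` by Jensen, because `Ẑ_i` is centered: `Ẑ_i(g) = E[Ẑ_i(g) - Ẑ_i(g') | g]`.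
-/

open scoped ENNReal

theorem pi_norm_eq_iSup_norm {ι E : Type*} [Fintype ι] [SeminormedAddCommGroup E] (f : ι → E) :
    ‖f‖ = ⨆ i, ‖f i‖ :=
  le_antisymm
    ((pi_norm_le_iff_of_nonneg (Real.iSup_nonneg fun _ => norm_nonneg _)).2 fun i =>
      le_ciSup (f := fun i => ‖f i‖) (Set.finite_range _).bddAbove i)
    (Real.iSup_le (norm_le_pi_norm f) (norm_nonneg _))

theorem rpow_integral_norm_comp_rpow_eq_lpNorm_map {Ω β V : Type*} [MeasurableSpace Ω]
    [MeasurableSpace β] [NormedAddCommGroup V] {P : Measure Ω} {X : Ω → β}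
    (hX : AEMeasurable X P) {f : β → V} (hf : AEStronglyMeasurable f (P.map X)) {p : ℝ}
    (hp : 0 < p) :
    (∫ ω, ‖f (X ω)‖ ^ p ∂P) ^ (1 / p) = lpNorm f (ENNReal.ofReal p) (P.map X) := by
  rw [lpNorm_eq_integral_norm_rpow_toReal (by simpa using hp)
    ENNReal.ofReal_ne_top hf, ENNReal.toReal_ofReal hp.le,
    integral_map hX (hf.norm.aemeasurable.pow_const p).aestronglyMeasurable, one_div]

theorem stdGaussian_eq_stdGaussian_euclideanSpace (d : ℕ) :
    _root_.stdGaussian d = ProbabilityTheory.stdGaussian (EuclideanSpace ℝ (Fin d)) := by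
  rw [_root_.stdGaussian, ← map_pi_eq_stdGaussian]
  rfl

section Decoupling

variable {α E : Type*} [MeasurableSpace α] [NormedAddCommGroup E] {μ : Measure α}
  [IsProbabilityMeasure μ] {F : α → E} {p : ℝ≥0∞}

theorem eLpNorm_sub_prod_le_two_mul (hF : AEStronglyMeasurable F μ) (hp : 1 ≤ p) :
    eLpNorm (fun z : α × α => F z.1 - F z.2) p (μ.prod μ) ≤ 2 * eLpNorm F p μ := by
  calc eLpNorm (fun z : α × α => F z.1 - F z.2) p (μ.prod μ)
      ≤ eLpNorm (F ∘ Prod.fst) p (μ.prod μ) + eLpNorm (F ∘ Prod.snd) p (μ.prod μ) :=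
        eLpNorm_sub_le hF.comp_fst hF.comp_snd hp
    _ = 2 * eLpNorm F p μ := by
        rw [eLpNorm_comp_measurePreserving hF measurePreserving_fst,
          eLpNorm_comp_measurePreserving hF measurePreserving_snd, two_mul]

theorem eLpNorm_le_eLpNorm_sub_prod [NormedSpace ℝ E] [CompleteSpace E] (hF : Integrable F μ)
    (hF0 : ∫ x, F x ∂μ = 0) (hp1 : 1 ≤ p) (hp : p ≠ ∞) :
    eLpNorm F p μ ≤ eLpNorm (fun z : α × α => F z.1 - F z.2) p (μ.prod μ) := by
  have hp0 : p ≠ 0 := (zero_lt_one.trans_le hp1).ne'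
  have hr : 0 < p.toReal := ENNReal.toReal_pos hp0 hp
  have hslice : ∀ x, ‖F x‖ₑ ≤ eLpNorm (fun y => F x - F y) p μ := by
    intro x
    have hx : ∫ y, (F x - F y) ∂μ = F x := by
      rw [integral_sub (integrable_const _) hF, hF0, integral_const]
      simp
    calc ‖F x‖ₑ = ‖∫ y, (F x - F y) ∂μ‖ₑ := by rw [hx]
      _ ≤ eLpNorm (fun y => F x - F y) 1 μ :=
        (enorm_integral_le_lintegral_enorm _).trans_eq eLpNorm_one_eq_lintegral_enorm.symm
      _ ≤ eLpNorm (fun y => F x - F y) p μ :=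
        eLpNorm_le_eLpNorm_of_exponent_le hp1 (aestronglyMeasurable_const.sub hF.1)
  have hmeas : AEStronglyMeasurable (fun z : α × α => F z.1 - F z.2) (μ.prod μ) :=
    hF.1.comp_fst.sub hF.1.comp_snd
  rw [eLpNorm_eq_lintegral_rpow_enorm_toReal hp0 hp, eLpNorm_eq_lintegral_rpow_enorm_toReal hp0 hp,
    lintegral_prod _ (hmeas.enorm.pow_const _)]
  gcongr with x
  calc ‖F x‖ₑ ^ p.toReal ≤ eLpNorm (fun y => F x - F y) p μ ^ p.toReal := by
        gcongr
        exact hslice x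
    _ = ∫⁻ y, ‖F x - F y‖ₑ ^ p.toReal ∂μ := by
      rw [eLpNorm_eq_lintegral_rpow_enorm_toReal hp0 hp, ← ENNReal.rpow_mul,
        one_div_mul_cancel hr.ne', ENNReal.rpow_one]

end Decoupling

section Chaos

variable {ι E F : Type*} [NormedAddCommGroup E] [InnerProductSpace ℝ E]
  [NormedAddCommGroup F] [InnerProductSpace ℝ F]

noncomputable def chaos (u : ι → E →ₗ[ℝ] F) (x : E) : ι → ℝ := fun i => ⟪u i x, u i x⟫

noncomputable def decoupledChaos (u : ι → E →ₗ[ℝ] F) (z : E × E) : ι → ℝ :=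
  fun i => ⟪u i z.1, u i z.2⟫

theorem decoupledChaos_rotation_pi_div_four (u : ι → E →ₗ[ℝ] F) (z : E × E) :
    decoupledChaos u (ContinuousLinearMap.rotation (Real.pi / 4) z) =
      (2⁻¹ : ℝ) • (chaos u z.2 - chaos u z.1) := by
  have hc : √2 / 2 * (√2 / 2) = (2⁻¹ : ℝ) := by
    rw [div_mul_div_comm, Real.mul_self_sqrt zero_le_two]
    norm_num
  ext i
  simp only [decoupledChaos, chaos, ContinuousLinearMap.rotation_apply, Real.cos_pi_div_four,
    Real.sin_pi_div_four, map_add, map_smul, neg_smul, map_neg, inner_add_left, inner_add_right,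
    inner_neg_right, real_inner_smul_left, real_inner_smul_right, Pi.smul_apply,
    Pi.sub_apply, smul_eq_mul, real_inner_comm (u i z.1)]
  linear_combination (⟪u i z.2, u i z.2⟫ - ⟪u i z.1, u i z.1⟫) * hc

variable [FiniteDimensional ℝ E] (u : ι → E →ₗ[ℝ] F)

theorem continuous_chaos : Continuous (chaos u) :=
  continuous_pi fun i => ((u i).continuous_of_finiteDimensional).inner
    (u i).continuous_of_finiteDimensional

theorem continuous_decoupledChaos : Continuous (decoupledChaos u) :=
  continuous_pi fun i => ((u i).continuous_of_finiteDimensional.comp continuous_fst).inner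
    ((u i).continuous_of_finiteDimensional.comp continuous_snd)

variable [Fintype ι] [MeasurableSpace E]

noncomputable def centeredChaos (μ : Measure E) (x : E) : ι → ℝ := chaos u x - ∫ y, chaos u y ∂μ

theorem continuous_centeredChaos (μ : Measure E) : Continuous (centeredChaos u μ) :=
  (continuous_chaos u).sub continuous_const

variable [BorelSpace E] (μ : Measure E) [IsGaussian μ]

theorem memLp_chaos {p : ℝ≥0∞} (hp : p ≠ ∞) : MemLp (chaos u) p μ := by
  refine memLp_pi_iff.2 fun i => ?_
  have hu : MemLp (u i) (p * 2) μ :=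
    (LinearMap.toContinuousLinearMap (u i)).comp_memLp' (IsGaussian.memLp_id μ _ (by finiteness))
  have hsq := hu.norm_rpow_div 2
  rw [ENNReal.mul_div_cancel_right two_ne_zero ENNReal.ofNat_ne_top] at hsq
  convert hsq using 2 with x
  simp [chaos]

theorem integrable_chaos : Integrable (chaos u) μ :=
  memLp_one_iff_integrable.1 (memLp_chaos u μ ENNReal.one_ne_top)

theorem memLp_centeredChaos {p : ℝ≥0∞} (hp : p ≠ ∞) : MemLp (centeredChaos u μ) p μ :=
  (memLp_chaos u μ hp).sub (memLp_const _)

theorem integral_centeredChaos : ∫ x, centeredChaos u μ x ∂μ = 0 := by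
  unfold centeredChaos
  rw [integral_sub (integrable_chaos u μ) (integrable_const _), integral_const]
  simp

variable {μ}

theorem eLpNorm_decoupledChaos (hμ : ∫ x, x ∂μ = 0) (p : ℝ≥0∞) :
    eLpNorm (decoupledChaos u) p (μ.prod μ) =
      2⁻¹ * eLpNorm (fun z : E × E => centeredChaos u μ z.1 - centeredChaos u μ z.2) p
        (μ.prod μ) := by
  have hrot :
      MeasurePreserving (ContinuousLinearMap.rotation (Real.pi / 4)) (μ.prod μ) (μ.prod μ) :=
    ⟨(ContinuousLinearMap.rotation _).continuous.measurable,
      IsGaussian.map_rotation_eq_self hμ _⟩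
  rw [← eLpNorm_comp_measurePreserving (continuous_decoupledChaos u).aestronglyMeasurable hrot]
  have : decoupledChaos u ∘ ContinuousLinearMap.rotation (Real.pi / 4) =
      (2⁻¹ : ℝ) • ((fun z : E × E => centeredChaos u μ z.2) - fun z => centeredChaos u μ z.1) := by
    funext z
    simp only [Function.comp_apply, decoupledChaos_rotation_pi_div_four, centeredChaos,
      sub_sub_sub_cancel_right, Pi.smul_apply, Pi.sub_apply]
  rw [this, eLpNorm_const_smul, eLpNorm_sub_comm]
  congr 1
  simp [enorm]

theorem eLpNorm_decoupledChaos_le (hμ : ∫ x, x ∂μ = 0) {p : ℝ≥0∞} (hp : 1 ≤ p) :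
    eLpNorm (decoupledChaos u) p (μ.prod μ) ≤ eLpNorm (centeredChaos u μ) p μ := by
  calc eLpNorm (decoupledChaos u) p (μ.prod μ)
      ≤ 2⁻¹ * (2 * eLpNorm (centeredChaos u μ) p μ) := by
        rw [eLpNorm_decoupledChaos u hμ]
        gcongr
        exact eLpNorm_sub_prod_le_two_mul (continuous_centeredChaos u μ).aestronglyMeasurable hp
    _ = eLpNorm (centeredChaos u μ) p μ :=
        ENNReal.inv_mul_cancel_left two_ne_zero ENNReal.ofNat_ne_top

theorem two_inv_mul_eLpNorm_le_eLpNorm_decoupledChaos (hμ : ∫ x, x ∂μ = 0) {p : ℝ≥0∞}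
    (hp1 : 1 ≤ p) (hp : p ≠ ∞) :
    2⁻¹ * eLpNorm (centeredChaos u μ) p μ ≤ eLpNorm (decoupledChaos u) p (μ.prod μ) := by
  rw [eLpNorm_decoupledChaos u hμ]
  gcongr
  exact eLpNorm_le_eLpNorm_sub_prod ((memLp_centeredChaos u μ hp).integrable hp1)
    (integral_centeredChaos u μ) hp1 hp

theorem lpNorm_decoupledChaos_mem_Icc (hμ : ∫ x, x ∂μ = 0) {p : ℝ≥0∞} (hp1 : 1 ≤ p)
    (hp : p ≠ ∞) :
    lpNorm (decoupledChaos u) p (μ.prod μ) ∈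
      Set.Icc (2⁻¹ * lpNorm (centeredChaos u μ) p μ) (lpNorm (centeredChaos u μ) p μ) := by
  have hfin := (memLp_centeredChaos u μ hp).eLpNorm_ne_top
  have hupper := eLpNorm_decoupledChaos_le u hμ hp1
  rw [← toReal_eLpNorm (memLp_centeredChaos u μ hp).1,
    ← toReal_eLpNorm (continuous_decoupledChaos u).aestronglyMeasurable]
  refine ⟨?_, ENNReal.toReal_mono hfin hupper⟩
  calc 2⁻¹ * (eLpNorm (centeredChaos u μ) p μ).toReal
      = (2⁻¹ * eLpNorm (centeredChaos u μ) p μ).toReal := by simp [ENNReal.toReal_mul]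
    _ ≤ _ := ENNReal.toReal_mono (ne_top_of_le_ne_top hfin hupper)
        (two_inv_mul_eLpNorm_le_eLpNorm_decoupledChaos u hμ hp1 hp)

end Chaos

theorem stmt2_general {d : ℕ} {Ω : Type*} [MeasurableSpace Ω] (P : Measure Ω)
    [IsProbabilityMeasure P] (g g' : Ω → EuclideanSpace ℝ (Fin d))
    (hgm : Measurable g) (hg'm : Measurable g')
    (hg : Measure.map g P = stdGaussian d) (hg' : Measure.map g' P = stdGaussian d)
    (hindep : IndepFun g g' P)
    (M : ℕ)
    (u : Fin M → (EuclideanSpace ℝ (Fin d) →ₗ[ℝ] EuclideanSpace ℝ (Fin d)))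
    (Z Zhat : Fin M → Ω → ℝ)
    (hZ : ∀ i ω, Z i ω = ⟪u i (g ω), u i (g' ω)⟫)
    (hZhat : ∀ i ω, Zhat i ω =
      ⟪u i (g ω), u i (g ω)⟫ - ∫ ω', ⟪u i (g ω'), u i (g ω')⟫ ∂P)
    (p : ℝ) (hp : 1 ≤ p) :
    (1 / 2) * (∫ ω, (⨆ i, |Zhat i ω|) ^ p ∂P) ^ (1 / p) ≤
        (∫ ω, (⨆ i, |Z i ω|) ^ p ∂P) ^ (1 / p) ∧
      (∫ ω, (⨆ i, |Z i ω|) ^ p ∂P) ^ (1 / p) ≤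
        (∫ ω, (⨆ i, |Zhat i ω|) ^ p ∂P) ^ (1 / p) := by
  set μ := stdGaussian d
  have hμ : μ = ProbabilityTheory.stdGaussian (EuclideanSpace ℝ (Fin d)) :=
    stdGaussian_eq_stdGaussian_euclideanSpace d
  have : IsGaussian μ := hμ ▸ inferInstance
  have hpair : P.map (fun ω => (g ω, g' ω)) = μ.prod μ := by
    rw [(indepFun_iff_map_prod_eq_prod_map_map hgm.aemeasurable hg'm.aemeasurable).1 hindep,
      hg, hg']
  have hZ' : ∀ ω, ⨆ i, |Z i ω| = ‖decoupledChaos u (g ω, g' ω)‖ := fun ω => by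
    simp only [pi_norm_eq_iSup_norm, Real.norm_eq_abs, decoupledChaos, hZ]
  have hmean : ∀ i, ∫ ω, ⟪u i (g ω), u i (g ω)⟫ ∂P = (∫ x, chaos u x ∂μ) i := fun i => by
    rw [eval_integral (integrable_chaos u μ).eval, ← hg,
      integral_map hgm.aemeasurable (f := fun x => chaos u x i)
        ((continuous_apply i).comp (continuous_chaos u)).aestronglyMeasurable]
    rfl
  have hZhat' : ∀ ω, ⨆ i, |Zhat i ω| = ‖centeredChaos u μ (g ω)‖ := fun ω => by
    simp only [pi_norm_eq_iSup_norm, Real.norm_eq_abs, centeredChaos, Pi.sub_apply, hZhat, hmean,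
      chaos]
  have hp0 : 0 < p := zero_lt_one.trans_le hp
  simp_rw [hZ', hZhat']
  rw [rpow_integral_norm_comp_rpow_eq_lpNorm_map (hgm.prodMk hg'm).aemeasurable
      (continuous_decoupledChaos u).aestronglyMeasurable hp0,
    rpow_integral_norm_comp_rpow_eq_lpNorm_map hgm.aemeasurable
      (continuous_centeredChaos u μ).aestronglyMeasurable hp0, hpair, hg, one_div]
  exact lpNorm_decoupledChaos_mem_Icc u (hμ ▸ integral_id_stdGaussian) (by simpa using hp)
    ENNReal.ofReal_ne_top

/-- With `Z_i = ⟨u_i g, u_i g'⟩` and `Ẑ_i = ⟨u_i g, u_i g⟩ − E⟨u_i g, u_i g⟩`,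
for every `p ≥ 1`:
`(1/2)‖sup_i |Ẑ_i|‖_p ≤ ‖sup_i |Z_i|‖_p ≤ ‖sup_i |Ẑ_i|‖_p`. -/
theorem stmt2 {d : ℕ} {Ω : Type*} [MeasurableSpace Ω] (P : Measure Ω)
    [IsProbabilityMeasure P] (g g' : Ω → EuclideanSpace ℝ (Fin d))
    (hgm : Measurable g) (hg'm : Measurable g')
    (hg : Measure.map g P = stdGaussian d) (hg' : Measure.map g' P = stdGaussian d)
    (hindep : IndepFun g g' P)
    (M : ℕ) (hM : 0 < M)
    (u : Fin M → (EuclideanSpace ℝ (Fin d) →ₗ[ℝ] EuclideanSpace ℝ (Fin d)))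
    (Z Zhat : Fin M → Ω → ℝ)
    (hZ : ∀ i ω, Z i ω = ⟪u i (g ω), u i (g' ω)⟫)
    (hZhat : ∀ i ω, Zhat i ω =
      ⟪u i (g ω), u i (g ω)⟫ - ∫ ω', ⟪u i (g ω'), u i (g ω')⟫ ∂P)
    (p : ℝ) (hp : 1 ≤ p) :
    (1 / 2) * (∫ ω, (⨆ i, |Zhat i ω|) ^ p ∂P) ^ (1 / p) ≤
        (∫ ω, (⨆ i, |Z i ω|) ^ p ∂P) ^ (1 / p) ∧
      (∫ ω, (⨆ i, |Z i ω|) ^ p ∂P) ^ (1 / p) ≤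
        (∫ ω, (⨆ i, |Zhat i ω|) ^ p ∂P) ^ (1 / p) :=
  stmt2_general P g g' hgm hg'm hg hg' hindep M u Z Zhat hZ hZhat p hp
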